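/- For d ≥ 2 and h ≥ 3, and any E ∈ (0, 1/2], there exists a fractional pebbling of the balanced d-ary tree of height h starting from the configuration with white weight 2E on the root and nothing elsewhere, ending with the empty configuration, such that the total weight never exceeds (d−1)h/2 + 1 + E. -/

import Mathlib

/-- Number of nodes of the complete d-ary tree of height h (levels 0..h-1). -/
def treeSize (d h : ℕ) : ℕ := ∑ k ∈ Finset.range h, d ^ k

/-- A fractional configuration: each node gets (black weight, white weight). -/
abbrev Cfg := ℕ → ℝ × ℝ

/-- Pebble weight of node i: b(i) + w(i). -/
def pw (c : Cfg) (i : ℕ) : ℝ := (c i).1 + (c i).2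

/-- Valid configuration: weights nonnegative, b(i)+w(i) ≤ 1, nothing outside the tree. -/
def Valid (n : ℕ) (c : Cfg) : Prop :=
  (∀ i, 0 ≤ (c i).1 ∧ 0 ≤ (c i).2 ∧ pw c i ≤ 1) ∧ (∀ i, n ≤ i → c i = (0, 0))

/-- Total pebble weight of a configuration. -/
def weight (n : ℕ) (c : Cfg) : ℝ := ∑ i ∈ Finset.range n, pw c i

/-- j is a child of i in heap indexing of the d-ary tree. -/
def child (d i j : ℕ) : Prop := ∃ k, k < d ∧ j = d * i + 1 + k

def isLeaf (d n i : ℕ) : Prop := i < n ∧ n ≤ d * i + 1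

/-- Every child of i has pebble weight 1. -/
def covered (d : ℕ) (c : Cfg) (i : ℕ) : Prop := ∀ j, child d i j → pw c j = 1

/-- Legal fractional pebbling moves: decrease black weight on any node; on a node
whose children all have pebble weight 1, set its white weight to 0 and increase its
black weight arbitrarily, optionally simultaneously decreasing children's black
weights (sliding); increase white weight on any node (subject to validity);
increase black weight on any leaf. -/
def Move (d n : ℕ) (c c' : Cfg) : Prop :=
  (∃ i, (c' i).1 ≤ (c i).1 ∧ (c' i).2 = (c i).2 ∧ ∀ j, j ≠ i → c' j = c j) ∨
  (∃ i, i < n ∧ covered d c i ∧ (c i).1 ≤ (c' i).1 ∧ (c' i).2 = 0 ∧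
    (∀ j, child d i j → (c' j).1 ≤ (c j).1 ∧ (c' j).2 = (c j).2) ∧
    (∀ j, j ≠ i → ¬ child d i j → c' j = c j)) ∨
  (∃ i, (c' i).1 = (c i).1 ∧ (c i).2 ≤ (c' i).2 ∧ ∀ j, j ≠ i → c' j = c j) ∨
  (∃ i, isLeaf d n i ∧ (c' i).2 = (c i).2 ∧ (c i).1 ≤ (c' i).1 ∧ ∀ j, j ≠ i → c' j = c j)

/-- A fractional pebbling: valid configurations connected by legal moves. -/
def Pebbling (d n T : ℕ) (c : ℕ → Cfg) : Prop :=
  (∀ t, t ≤ T → Valid n (c t)) ∧ (∀ t, t < T → Move d n (c t) (c (t + 1)))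

def EmptyCfg (c : Cfg) : Prop := ∀ i, c i = (0, 0)

/-- Root-pebbling: starts and ends empty; at some time the root has pebble weight 1. -/
def RootPebbling (d n T : ℕ) (c : ℕ → Cfg) : Prop :=
  Pebbling d n T c ∧ EmptyCfg (c 0) ∧ EmptyCfg (c T) ∧ ∃ t, t ≤ T ∧ pw (c t) 0 = 1

/-!
Strategies are built bottom-up, by induction on the height `p + 2` of a node `v`; write
`D = d - 1`. A node can trade white `w` on it for black `b` within `D (p + 2) / 2 + 1 + (w + b) / 2`
(plus `w / 2` at height 2), it can be pebbled within `D p / 2 + d` if white `1/2` may stay on the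
first `d - 1` children of every node along its path of last children, and that residue can then be
cleared within `D (p + 2) / 2 + 1`. The inductive step puts black `x` on the first children one at
a time, pebbles the last child lazily, tops the first children up with white `1 - x`, and covers
`v` while sliding the black off its children; it then clears the residue below the last child and
the whites on the first children. All of this composes because a strategy inside a subtree runs
unchanged next to any valid content outside it. For the theorem, the root trades white `2E` for
nothing within `D h / 2 + 1 + E`.
-/

namespace FracPebbling

open Finset Relation

variable {d n : ℕ}

lemma pw_add (c c' : Cfg) (i : ℕ) : pw (c + c') i = pw c i + pw c' i := by
  simp only [pw, Pi.add_apply, Prod.fst_add, Prod.snd_add]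
  ring

lemma weight_add (c c' : Cfg) : weight n (c + c') = weight n c + weight n c' := by
  simp only [weight, pw_add, sum_add_distrib]

@[simp] lemma weight_zero : weight n 0 = 0 := by simp [weight, pw]

lemma weight_single {i : ℕ} (hi : i < n) (a : ℝ × ℝ) :
    weight n (Pi.single i a) = a.1 + a.2 := by
  rw [weight, sum_eq_single_of_mem i (mem_range.2 hi) fun j _ hj => by simp [pw, hj]]
  simp [pw]

lemma valid_zero : Valid n 0 := ⟨fun _ => by simp [pw], fun _ _ => rfl⟩

lemma _root_.Valid.add {c c' : Cfg} (h : Valid n c) (h' : Valid n c')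
    (hdisj : ∀ j, c' j ≠ 0 → c j = 0) : Valid n (c + c') := by
  refine ⟨fun i => ?_, fun i hi => by simp [h.2 i hi, h'.2 i hi]⟩
  by_cases hi : c' i = 0
  · simpa [pw, hi] using h.1 i
  · simpa [pw, hdisj i hi] using h'.1 i

lemma eq_of_single_ne_zero {i j : ℕ} {a : ℝ × ℝ} (h : (Pi.single i a : Cfg) j ≠ 0) :
    j = i := by
  by_contra hj; simp [hj] at h

lemma valid_single {i : ℕ} (hi : i < n) {a : ℝ × ℝ}
    (ha : 0 ≤ a.1 ∧ 0 ≤ a.2 ∧ a.1 + a.2 ≤ 1) : Valid n (Pi.single i a) := by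
  refine ⟨fun j => ?_, fun j hj => by rw [Pi.single_eq_of_ne (by omega)]; rfl⟩
  by_cases hj : j = i
  · subst hj; simpa [pw] using ha
  · simp [pw, hj]

/-! ### The tree -/

lemma child_iff {v j : ℕ} : child d v j ↔ d * v + 1 ≤ j ∧ j ≤ d * v + d := by
  constructor
  · rintro ⟨k, hk, rfl⟩; omega
  · intro h; exact ⟨j - (d * v + 1), by omega, by omega⟩

lemma lt_of_child (hd : 0 < d) {i j : ℕ} (h : child d i j) : i < j := by
  have := Nat.le_mul_of_pos_left i hd
  have := (child_iff.mp h).1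
  omega

lemma parent_unique {p q j : ℕ} (hp : child d p j) (hq : child d q j) : p = q := by
  obtain ⟨k, hk, rfl⟩ := hp
  obtain ⟨k', hk', hj⟩ := hq
  have key : ∀ r k, k < d → (d * r + k) / d = r := fun r k hk => by
    rw [Nat.mul_add_div (by omega), Nat.div_eq_of_lt hk, add_zero]
  rw [← key p k hk, ← key q k' hk', (by omega : d * p + k = d * q + k')]

/-- `j` lies in the subtree rooted at `i`. -/
def Desc (d : ℕ) : ℕ → ℕ → Prop := ReflTransGen (child d)

lemma Desc.refl (i : ℕ) : Desc d i i := ReflTransGen.refl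

lemma Desc.of_child {i j : ℕ} (h : child d i j) : Desc d i j := ReflTransGen.single h

lemma Desc.trans {i j k : ℕ} (h : Desc d i j) (h' : Desc d j k) : Desc d i k :=
  ReflTransGen.trans h h'

lemma Desc.le (hd : 0 < d) {i j : ℕ} (h : Desc d i j) : i ≤ j := by
  induction h with
  | refl => rfl
  | tail _ hc ih => exact ih.trans (lt_of_child hd hc).le

lemma Desc.mul_add_one_le (hd : 0 < d) {i j : ℕ} (h : Desc d i j) (hne : i ≠ j) :
    d * i + 1 ≤ j := by
  rcases ReflTransGen.cases_head h with rfl | ⟨c, hic, hcj⟩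
  · exact absurd rfl hne
  · exact (child_iff.mp hic).1.trans (Desc.le hd hcj)

lemma Desc.total (hd : 0 < d) {a b x : ℕ} (ha : Desc d a x) (hb : Desc d b x) :
    Desc d a b ∨ Desc d b a := by
  induction x using Nat.strong_induction_on generalizing a b with
  | _ x ih =>
    rcases ReflTransGen.cases_tail ha with rfl | ⟨c, hac, hcx⟩
    · exact .inr hb
    rcases ReflTransGen.cases_tail hb with rfl | ⟨c', hbc, hcx'⟩
    · exact .inl ha
    obtain rfl := parent_unique hcx hcx'
    exact ih c (lt_of_child hd hcx) hac hbc

def firstChildren (d v : ℕ) : Finset ℕ := Ico (d * v + 1) (d * v + d)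

def lastChild (d v : ℕ) : ℕ := d * v + d

lemma child_iff_mem_firstChildren_or (hd : 0 < d) {v j : ℕ} :
    child d v j ↔ j ∈ firstChildren d v ∨ j = lastChild d v := by
  rw [child_iff, firstChildren, lastChild, mem_Ico]
  omega

lemma card_firstChildren (hd : 0 < d) (v : ℕ) : (#(firstChildren d v) : ℝ) = d - 1 := by
  rw [firstChildren, Nat.card_Ico, (by omega : d * v + d - (d * v + 1) = d - 1), Nat.cast_sub hd]
  simp

lemma child_lastChild (hd : 0 < d) (v : ℕ) : child d v (lastChild d v) :=
  (child_iff_mem_firstChildren_or hd).2 (.inr rfl)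

lemma child_of_mem_firstChildren (hd : 0 < d) {v u : ℕ} (hu : u ∈ firstChildren d v) :
    child d v u :=
  (child_iff_mem_firstChildren_or hd).2 (.inl hu)

lemma lt_lastChild (hd : 0 < d) (v : ℕ) : v < lastChild d v :=
  lt_of_child hd (child_lastChild hd v)

lemma lt_of_mem_firstChildren (hd : 0 < d) {v u : ℕ} (hu : u ∈ firstChildren d v) : v < u :=
  lt_of_child hd (child_of_mem_firstChildren hd hu)

lemma lt_lastChild_of_mem {v u : ℕ} (hu : u ∈ firstChildren d v) : u < lastChild d v :=
  (mem_Ico.1 hu).2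

lemma eq_of_desc_of_mem_firstChildren (hd : 0 < d) {v u u' : ℕ} (hu : u ∈ firstChildren d v)
    (hu' : child d v u') (h : Desc d u u') : u = u' := by
  by_contra hne
  have h1 := h.mul_add_one_le hd hne
  have h2 := (child_iff.1 (child_of_mem_firstChildren hd hu)).1
  have h3 := (child_iff.1 hu').2
  nlinarith [Nat.mul_le_mul_left d h2, Nat.le_mul_of_pos_left (d * v) hd]

lemma lastChild_lt_of_desc_of_mem (hd : 0 < d) {v u j : ℕ} (hu : u ∈ firstChildren d v)
    (hj : Desc d u j) (hne : u ≠ j) : lastChild d v < j := by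
  have h1 := hj.mul_add_one_le hd hne
  have h2 := (child_iff.1 (child_of_mem_firstChildren hd hu)).1
  simp only [lastChild]
  nlinarith [Nat.mul_le_mul_left d h2, Nat.le_mul_of_pos_left (d * v) hd]

lemma treeSize_succ (ℓ : ℕ) : treeSize d (ℓ + 1) = d * treeSize d ℓ + 1 := by
  simp [treeSize, sum_range_succ', pow_succ', mul_sum]

/-- `v` lies on level `h - γ` of the tree of height `h`, so its subtree has height `γ`. -/
def AtHeight (d h v γ : ℕ) : Prop :=
  ∃ ℓ, ℓ + γ = h ∧ treeSize d ℓ ≤ v ∧ v < treeSize d (ℓ + 1)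

lemma atHeight_root (d h : ℕ) : AtHeight d h 0 h :=
  ⟨0, by simp, by simp [treeSize], by simp [treeSize]⟩

lemma AtHeight.lt {h v γ : ℕ} (hv : AtHeight d h v (γ + 1)) : v < treeSize d h := by
  obtain ⟨ℓ, rfl, -, hv⟩ := hv
  exact hv.trans_le (sum_le_sum_of_subset (range_subset_range.2 (by omega)))

lemma AtHeight.of_child {h v j γ : ℕ} (hv : AtHeight d h v (γ + 1)) (hj : child d v j) :
    AtHeight d h j γ := by
  obtain ⟨ℓ, hℓ, h1, h2⟩ := hv
  have := child_iff.mp hj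
  refine ⟨ℓ + 1, by omega, ?_, ?_⟩ <;> simp only [treeSize_succ] at h2 ⊢
  · nlinarith
  · nlinarith

lemma AtHeight.isLeaf {h v : ℕ} (hv : AtHeight d h v 1) : isLeaf d (treeSize d h) v := by
  obtain ⟨ℓ, rfl, h1, h2⟩ := hv
  exact ⟨h2, by rw [treeSize_succ]; nlinarith⟩

def fill (S : Finset ℕ) (a : ℝ × ℝ) : Cfg := fun j => if j ∈ S then a else 0

@[simp] lemma fill_zero (S : Finset ℕ) : fill S 0 = 0 := by
  funext j; simp [fill]

@[simp] lemma fill_empty (a : ℝ × ℝ) : fill ∅ a = 0 := by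
  funext j; simp [fill]

lemma fill_insert {S : Finset ℕ} {u : ℕ} (hu : u ∉ S) (a : ℝ × ℝ) :
    fill (insert u S) a = Pi.single u a + fill S a := by
  funext j
  by_cases hj : j = u
  · subst hj; simp [fill, hu]
  · simp [fill, hj]

lemma mem_of_fill_ne_zero {S : Finset ℕ} {a : ℝ × ℝ} {j : ℕ} (h : fill S a j ≠ 0) :
    j ∈ S := by
  by_contra hj; simp [fill, hj] at h

lemma weight_fill {S : Finset ℕ} (hS : ∀ u ∈ S, u < n) (a : ℝ × ℝ) :
    weight n (fill S a) = #S * (a.1 + a.2) := by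
  have : range n ∩ S = S := inter_eq_right.2 fun u hu => mem_range.2 (hS u hu)
  simp only [weight, pw, fill, apply_ite Prod.fst, apply_ite Prod.snd, Prod.fst_zero,
    Prod.snd_zero, ← ite_add_zero, sum_ite_mem, this, sum_const, nsmul_eq_mul]

lemma valid_fill {S : Finset ℕ} {a : ℝ × ℝ} (h : ∀ u ∈ S, Valid n (Pi.single u a)) :
    Valid n (fill S a) := by
  refine ⟨fun j => ?_, fun j hj => ?_⟩ <;> by_cases hjS : j ∈ S
  · simpa [fill, hjS, pw] using (h j hjS).1 j
  · simp [fill, hjS, pw]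
  · simpa [fill, hjS] using (h j hjS).2 j hj
  · simp [fill, hjS, Prod.zero_eq_mk]

/-- What the lazy strategy leaves behind below a node `p` levels deep: white `1/2` on the first
`d - 1` children, and recursively the same below the last child. -/
noncomputable def pending (d : ℕ) : ℕ → ℕ → Cfg
  | 0, _ => 0
  | p + 1, r => fill (firstChildren d r) (0, 1 / 2) + pending d p (lastChild d r)

@[simp] lemma pending_zero (r : ℕ) : pending d 0 r = 0 := rfl

lemma pending_ne_zero (hd : 0 < d) {p r j : ℕ} (hj : pending d p r j ≠ 0) :
    Desc d r j ∧ r < j := by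
  induction p generalizing r with
  | zero => exact absurd rfl hj
  | succ p ih =>
    have hlast := child_lastChild hd r
    by_cases hfill : j ∈ firstChildren d r
    · have hc := child_of_mem_firstChildren hd hfill
      exact ⟨.of_child hc, lt_of_child hd hc⟩
    · obtain ⟨hdesc, hlt⟩ := ih (r := lastChild d r) (by simpa [pending, fill, hfill] using hj)
      exact ⟨(Desc.of_child hlast).trans hdesc, (lt_of_child hd hlast).trans hlt⟩

lemma valid_pending (hd : 0 < d) {h p r γ : ℕ} (hr : AtHeight d h r (γ + 1)) (hp : p ≤ γ) :
    Valid (treeSize d h) (pending d p r) := by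
  induction p generalizing r γ with
  | zero => exact valid_zero
  | succ p ih =>
    obtain ⟨γ, rfl⟩ : ∃ γ', γ = γ' + 1 := ⟨γ - 1, by omega⟩
    have hch : ∀ j, child d r j → AtHeight d h j (γ + 1) := fun j => hr.of_child
    refine Valid.add (valid_fill fun u hu => valid_single (hch u ?_).lt (by norm_num))
      (ih (hch _ ?_) (by omega)) fun j hj => ?_
    · exact child_of_mem_firstChildren hd hu
    · exact child_lastChild hd r
    · have := (pending_ne_zero hd hj).2
      simp [fill, firstChildren, lastChild] at this ⊢
      omega

lemma weight_pending (hd : 0 < d) {h p r γ : ℕ} (hr : AtHeight d h r (γ + 1)) (hp : p ≤ γ) :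
    weight (treeSize d h) (pending d p r) = p * ((d : ℝ) - 1) / 2 := by
  induction p generalizing r γ with
  | zero => simp [pending]
  | succ p ih =>
    obtain ⟨γ, rfl⟩ : ∃ γ', γ = γ' + 1 := ⟨γ - 1, by omega⟩
    have hch : ∀ j, child d r j → AtHeight d h j (γ + 1) := fun j => hr.of_child
    rw [pending, weight_add,
      ih (hch _ (child_lastChild hd r)) (by omega),
      weight_fill (fun u hu => (hch u (child_of_mem_firstChildren hd hu)).lt),
      card_firstChildren hd]
    push_cast
    ring

/-! ### Strategies -/

def BoundedMove (d n : ℕ) (P : ℝ) (c c' : Cfg) : Prop :=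
  Move d n c c' ∧ Valid n c' ∧ weight n c' ≤ P

lemma exists_pebbling {P : ℝ} {a b : Cfg} (ha : Valid n a) (haP : weight n a ≤ P)
    (hab : ReflTransGen (BoundedMove d n P) a b) :
    ∃ T c, Pebbling d n T c ∧ c 0 = a ∧ c T = b ∧ ∀ t ≤ T, weight n (c t) ≤ P := by
  induction hab with
  | refl => exact ⟨0, fun _ => a, ⟨fun _ _ => ha, fun _ h => absurd h (by omega)⟩, rfl, rfl,
      fun _ _ => haP⟩
  | @tail b c _ hbc ih =>
    obtain ⟨T, cs, ⟨hvalid, hmove⟩, hc0, hcT, hw⟩ := ih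
    refine ⟨T + 1, fun t => if t ≤ T then cs t else c, ⟨fun t ht => ?_, fun t ht => ?_⟩,
      by simp [hc0], by simp, fun t ht => ?_⟩
    · by_cases htT : t ≤ T
      · simpa [htT] using hvalid t htT
      · simpa [htT] using hbc.2.1
    · by_cases htT : t + 1 ≤ T
      · simpa [htT, (by omega : t ≤ T)] using hmove t htT
      · obtain rfl : t = T := by omega
        simpa [hcT] using hbc.1
    · by_cases htT : t ≤ T
      · simpa [htT] using hw t htT
      · simpa [htT] using hbc.2.2

def ValidIn (d n r : ℕ) (X : Cfg) : Prop := Valid n X ∧ ∀ j, X j ≠ 0 → Desc d r j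

lemma ValidIn.add {r : ℕ} {X Y : Cfg} (hX : ValidIn d n r X) (hY : ValidIn d n r Y)
    (hdisj : ∀ j, Y j ≠ 0 → X j = 0) : ValidIn d n r (X + Y) := by
  refine ⟨hX.1.add hY.1 hdisj, fun j hj => ?_⟩
  by_cases hYj : Y j = 0
  · exact hX.2 j (by simpa [hYj] using hj)
  · exact hY.2 j hYj

lemma ValidIn.mono {r u : ℕ} {X : Cfg} (hru : Desc d r u) (hX : ValidIn d n u X) :
    ValidIn d n r X :=
  ⟨hX.1, fun j hj => hru.trans (hX.2 j hj)⟩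

lemma ValidIn.single {r u : ℕ} (hru : Desc d r u) {a : ℝ × ℝ}
    (ha : Valid n (Pi.single u a)) : ValidIn d n r (Pi.single u a) :=
  ⟨ha, fun j hj => by
    obtain rfl : j = u := by by_contra h; simp [h] at hj
    exact hru⟩

lemma ValidIn.fill {r : ℕ} {S : Finset ℕ} (hS : ∀ u ∈ S, Desc d r u) {a : ℝ × ℝ}
    (ha : ∀ u ∈ S, Valid n (Pi.single u a)) : ValidIn d n r (fill S a) :=
  ⟨valid_fill ha, fun j hj => hS j (mem_of_fill_ne_zero hj)⟩

lemma ValidIn.add_context {r : ℕ} {ctx X : Cfg} (hX : ValidIn d n r X) (hctx : Valid n ctx)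
    (hctx0 : ∀ j, Desc d r j → ctx j = 0) : Valid n (ctx + X) :=
  hctx.add hX.1 fun j hj => hctx0 j (hX.2 j hj)

/-- A way to turn `X` into `Y` by moves whatever valid content `ctx` lies outside the subtree of
`r`, never using more than `P` on top of the weight of `ctx`. -/
def Strategy (d n r : ℕ) (X Y : Cfg) (P : ℝ) : Prop :=
  ∀ ctx : Cfg, Valid n ctx → (∀ j, Desc d r j → ctx j = 0) →
    Valid n (ctx + X) ∧ weight n (ctx + X) ≤ weight n ctx + P ∧
      ReflTransGen (BoundedMove d n (weight n ctx + P)) (ctx + X) (ctx + Y)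

namespace Strategy

variable {r : ℕ} {X Y : Cfg} {P : ℝ}

lemma mono {P' : ℝ} (h : Strategy d n r X Y P) (hP : P ≤ P') : Strategy d n r X Y P' := by
  intro ctx hctx hctx0
  obtain ⟨hX, hXP, hXY⟩ := h ctx hctx hctx0
  exact ⟨hX, by linarith,
    ReflTransGen.mono (fun c c' ⟨hm, hv, hw⟩ => ⟨hm, hv, by linarith⟩) _ _ hXY⟩

lemma trans {Z : Cfg} (h : Strategy d n r X Y P) (h' : Strategy d n r Y Z P) :
    Strategy d n r X Z P := fun ctx hctx hctx0 =>
  have ⟨hX, hXP, hXY⟩ := h ctx hctx hctx0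
  ⟨hX, hXP, hXY.trans (h' ctx hctx hctx0).2.2⟩

lemma valid_source (h : Strategy d n r X Y P) : Valid n X := by
  simpa using (h 0 valid_zero fun _ _ => rfl).1

lemma valid_target (h : Strategy d n r X Y P) : Valid n Y := by
  obtain ⟨hX, -, hXY⟩ := h 0 valid_zero fun _ _ => rfl
  rcases ReflTransGen.cases_tail hXY with hXY | ⟨c, -, -, hY, -⟩
  · simpa [← hXY] using hX
  · simpa using hY

lemma refl (hX : ValidIn d n r X) (hP : weight n X ≤ P) : Strategy d n r X X P :=
  fun ctx hctx hctx0 => ⟨hX.add_context hctx hctx0, by rw [weight_add]; linarith, .refl⟩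

lemma of_move (hX : ValidIn d n r X) (hY : ValidIn d n r Y) (hXP : weight n X ≤ P)
    (hYP : weight n Y ≤ P)
    (hmove : ∀ ctx : Cfg, (∀ j, Desc d r j → ctx j = 0) → Move d n (ctx + X) (ctx + Y)) :
    Strategy d n r X Y P := fun ctx hctx hctx0 =>
  ⟨hX.add_context hctx hctx0, by rw [weight_add]; linarith,
    .single ⟨hmove ctx hctx0, hY.add_context hctx hctx0, by rw [weight_add]; linarith⟩⟩

lemma lift {u : ℕ} {Z : Cfg} (hru : Desc d r u) (hZ : ValidIn d n r Z)
    (hZu : ∀ j, Desc d u j → Z j = 0) (h : Strategy d n u X Y P) :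
    Strategy d n r (Z + X) (Z + Y) (weight n Z + P) := by
  intro ctx hctx hctx0
  obtain ⟨hX, hXP, hXY⟩ := h (ctx + Z) (hZ.add_context hctx hctx0) fun j hj => by
    simp [hctx0 j (hru.trans hj), hZu j hj]
  simp only [weight_add, add_assoc] at hX hXP hXY ⊢
  exact ⟨hX, by linarith, hXY⟩

/-- Strategies in the subtrees of an antichain `S` can be run one after the other; at any time
one of them is active and each of the others holds `x` or `y`. -/
theorem sequence {S : Finset ℕ} {W : Cfg} {x y : ℝ × ℝ} {M Q : ℝ}
    (hSn : ∀ u ∈ S, u < n) (hSr : ∀ u ∈ S, Desc d r u)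
    (hS : ∀ u ∈ S, ∀ u' ∈ S, Desc d u u' → u = u')
    (hW : ValidIn d n r W) (hWS : ∀ u ∈ S, ∀ j, Desc d u j → W j = 0)
    (hsub : ∀ u ∈ S, Strategy d n u (Pi.single u y) (Pi.single u x) Q)
    (hxM : x.1 + x.2 ≤ M) (hyM : y.1 + y.2 ≤ M) (hMQ : M ≤ Q)
    (hP : weight n W + (#S - 1) * M + Q ≤ P) :
    Strategy d n r (W + fill S y) (W + fill S x) P := by
  induction S using Finset.induction_on generalizing W with
  | empty =>
    rw [card_empty, Nat.cast_zero] at hP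
    simpa using refl hW (by linarith)
  | insert a S haS ih =>
    have hSa : ∀ u ∈ S, ¬ Desc d u a := fun u hu h =>
      haS (hS u (mem_insert_of_mem hu) a (mem_insert_self a S) h ▸ hu)
    have haS' : ∀ j ∈ S, ¬ Desc d a j := fun j hj h =>
      haS (hS a (mem_insert_self a S) j (mem_insert_of_mem hj) h ▸ hj)
    rw [card_insert_of_notMem haS, Nat.cast_add, Nat.cast_one] at hP
    simp only [mem_insert, forall_eq_or_imp] at hSn hSr hWS hsub
    have h1 : Strategy d n r (W + Pi.single a y + fill S y) (W + Pi.single a y + fill S x) P := by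
      refine ih hSn.2 hSr.2
        (fun u hu u' hu' => hS u (mem_insert_of_mem hu) u' (mem_insert_of_mem hu'))
        (hW.add (.single hSr.1 hsub.1.valid_source) fun j hj => ?_) (fun u hu j hj => ?_)
        hsub.2 ?_
      · rw [eq_of_single_ne_zero hj]
        exact hWS.1 a (.refl a)
      · have hja : j ≠ a := by rintro rfl; exact hSa u hu hj
        simp [hWS.2 u hu j hj, hja]
      · rw [weight_add, weight_single hSn.1]
        linarith
    have h2 : Strategy d n r (W + fill S x + Pi.single a y) (W + fill S x + Pi.single a x) P := by
      refine (lift hSr.1 (hW.add (.fill hSr.2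
          fun u hu => (hsub.2 u hu).valid_target) fun j hj => ?_)
        (fun j hj => ?_) hsub.1).mono ?_
      · have hjS := mem_of_fill_ne_zero hj
        exact hWS.2 j hjS j (.refl j)
      · have hjS : j ∉ S := fun h => haS' j h hj
        simp [hWS.1 j hj, fill, hjS]
      · rw [weight_add, weight_fill hSn.2]
        nlinarith [(#S).cast_nonneg (α := ℝ)]
    rw [fill_insert haS, fill_insert haS, ← add_assoc, ← add_assoc]
    exact h1.trans (by convert h2 using 1 <;> abel)

lemma white {u : ℕ} (hu : u < n) {a w w' : ℝ} (ha : 0 ≤ a) (hw : 0 ≤ w) (hww' : w ≤ w')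
    (h1 : a + w' ≤ 1) (hP : a + w' ≤ P) :
    Strategy d n u (Pi.single u (a, w)) (Pi.single u (a, w')) P := by
  refine of_move (.single (.refl u) (valid_single hu ⟨ha, hw, by linarith⟩))
    (.single (.refl u) (valid_single hu ⟨ha, by linarith, h1⟩))
    (by rw [weight_single hu]; linarith) (by rw [weight_single hu]; exact hP) fun ctx _ => ?_
  exact .inr <| .inr <| .inl ⟨u, by simp, by simpa, fun j hj => by simp [hj]⟩

lemma leaf {u : ℕ} (hu : isLeaf d n u) {a : ℝ} (ha0 : 0 ≤ a) (ha1 : a ≤ 1) :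
    Strategy d n u 0 (Pi.single u (a, 0)) a := by
  refine of_move ⟨valid_zero, fun j hj => absurd rfl hj⟩
    (.single (.refl u) (valid_single hu.1 ⟨ha0, le_rfl, by simpa⟩))
    (by simpa) (by rw [weight_single hu.1]; simp) fun ctx _ => ?_
  exact .inr <| .inr <| .inr ⟨u, hu, by simp, by simpa, fun j hj => by simp [hj]⟩

end Strategy

lemma move_cover {v : ℕ} (hv : v < n) {c A B : Cfg} (hcv : c v = 0)
    (hcch : ∀ j, child d v j → c j = 0) (hcov : ∀ j, child d v j → pw A j = 1)
    (hv1 : (A v).1 ≤ (B v).1) (hv2 : (B v).2 = 0)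
    (hch : ∀ j, child d v j → (B j).1 ≤ (A j).1 ∧ (B j).2 = (A j).2)
    (hrest : ∀ j, j ≠ v → ¬ child d v j → B j = A j) : Move d n (c + A) (c + B) := by
  refine .inr <| .inl ⟨v, hv, fun j hj => ?_, by simpa [hcv], by simpa [hcv], fun j hj => ?_,
    fun j hjv hj => by simp [hrest j hjv hj]⟩
  · simpa [pw_add, hcch j hj, pw] using hcov j hj
  · simpa [hcch j hj] using hch j hj

/-! ### A node and its children -/

def family (d v : ℕ) (a e c : ℝ × ℝ) : Cfg :=
  Pi.single v a + fill (firstChildren d v) e + Pi.single (lastChild d v) c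

lemma family_add_fill (v : ℕ) (a e c : ℝ × ℝ) :
    family d v a 0 c + fill (firstChildren d v) e = family d v a e c := by
  simp only [family, fill_zero, add_zero]
  abel

lemma family_add_single (v : ℕ) (a e c : ℝ × ℝ) :
    family d v a e 0 + Pi.single (lastChild d v) c = family d v a e c := by
  simp [family]

lemma family_of_lastChild_zero (v : ℕ) (a e : ℝ × ℝ) :
    family d v a e 0 = Pi.single v a + fill (firstChildren d v) e := by
  simp [family]

@[simp] lemma family_zero_zero (v : ℕ) (a : ℝ × ℝ) : family d v a 0 0 = Pi.single v a := by
  simp [family]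

section family

variable {v : ℕ} {a e c : ℝ × ℝ}

lemma family_apply_self (hd : 0 < d) : family d v a e c v = a := by
  have : v ∉ firstChildren d v := fun h => (lt_of_mem_firstChildren hd h).false
  simp [family, fill, this, (lt_lastChild hd v).ne]

lemma family_apply_of_mem (hd : 0 < d) {j : ℕ} (hj : j ∈ firstChildren d v) :
    family d v a e c j = e := by
  simp [family, fill, hj, (lt_of_mem_firstChildren hd hj).ne', (lt_lastChild_of_mem hj).ne]

lemma family_apply_lastChild (hd : 0 < d) : family d v a e c (lastChild d v) = c := by
  have : lastChild d v ∉ firstChildren d v := fun h => (lt_lastChild_of_mem h).false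
  simp [family, fill, this, (lt_lastChild hd v).ne']

lemma family_apply_of_not_child (hd : 0 < d) {j : ℕ} (hjv : j ≠ v) (hj : ¬ child d v j) :
    family d v a e c j = 0 := by
  have hjS : j ∉ firstChildren d v := fun h => hj (child_of_mem_firstChildren hd h)
  have hjℓ : j ≠ lastChild d v := fun h => hj (h ▸ child_lastChild hd v)
  simp [family, fill, hjv, hjS, hjℓ]

lemma family_apply_of_lastChild_lt (hd : 0 < d) {j : ℕ} (hj : lastChild d v < j) :
    family d v a e c j = 0 :=
  family_apply_of_not_child hd (by have := lt_lastChild hd v; omega)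
    fun h => by have := (child_iff.1 h).2; simp only [lastChild] at hj; omega

lemma weight_family (hd : 0 < d) (hn : lastChild d v < n) :
    weight n (family d v a e c) = a.1 + a.2 + (d - 1) * (e.1 + e.2) + (c.1 + c.2) := by
  rw [family, weight_add, weight_add, weight_single ((lt_lastChild hd v).trans hn),
    weight_fill fun u hu => (lt_lastChild_of_mem hu).trans hn, weight_single hn,
    card_firstChildren hd]

lemma validIn_family (hd : 0 < d) (hn : lastChild d v < n)
    (ha : 0 ≤ a.1 ∧ 0 ≤ a.2 ∧ a.1 + a.2 ≤ 1)
    (he : 0 ≤ e.1 ∧ 0 ≤ e.2 ∧ e.1 + e.2 ≤ 1) (hc : 0 ≤ c.1 ∧ 0 ≤ c.2 ∧ c.1 + c.2 ≤ 1) :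
    ValidIn d n v (family d v a e c) := by
  refine ((ValidIn.single (.refl v) (valid_single ((lt_lastChild hd v).trans hn) ha)).add
    (.fill (fun u hu => .of_child (child_of_mem_firstChildren hd hu))
      fun u hu => valid_single ((lt_lastChild_of_mem hu).trans hn) he) fun j hj => ?_).add
    (.single (.of_child (child_lastChild hd v)) (valid_single hn hc)) fun j hj => ?_
  · simp [(lt_of_mem_firstChildren hd (mem_of_fill_ne_zero hj)).ne']
  · obtain rfl := eq_of_single_ne_zero hj
    have : lastChild d v ∉ firstChildren d v := fun h => (lt_lastChild_of_mem h).false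
    simp [fill, this, (lt_lastChild hd v).ne']

lemma validIn_family_add (hd : 0 < d) (hn : lastChild d v < n)
    (ha : 0 ≤ a.1 ∧ 0 ≤ a.2 ∧ a.1 + a.2 ≤ 1)
    (he : 0 ≤ e.1 ∧ 0 ≤ e.2 ∧ e.1 + e.2 ≤ 1) (hc : 0 ≤ c.1 ∧ 0 ≤ c.2 ∧ c.1 + c.2 ≤ 1) {Z : Cfg}
    (hZ : ValidIn d n (lastChild d v) Z) (hZℓ : Z (lastChild d v) = 0) :
    ValidIn d n v (family d v a e c + Z) :=
  (validIn_family hd hn ha he hc).add (hZ.mono (.of_child (child_lastChild hd v))) fun j hj =>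
    family_apply_of_lastChild_lt hd <| lt_of_le_of_ne (Desc.le hd (hZ.2 j hj)) (by
      rintro rfl; exact hj hZℓ)

lemma family_zero_of_desc_lastChild (hd : 0 < d) {j : ℕ} (hj : Desc d (lastChild d v) j) :
    family d v a e 0 j = 0 := by
  rcases eq_or_ne (lastChild d v) j with rfl | hne
  · exact family_apply_lastChild hd
  · exact family_apply_of_lastChild_lt hd (lt_of_le_of_ne (Desc.le hd hj) hne)

lemma family_zero_of_desc_mem (hd : 0 < d) {u j : ℕ} (hu : u ∈ firstChildren d v)
    (hj : Desc d u j) : family d v a 0 c j = 0 := by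
  rcases eq_or_ne u j with rfl | hne
  · exact family_apply_of_mem hd hu
  · exact family_apply_of_lastChild_lt hd (lastChild_lt_of_desc_of_mem hd hu hj hne)

end family

namespace Strategy

variable {P : ℝ}

lemma cover (hd : 0 < d) {v : ℕ} (hn : lastChild d v < n) {Z : Cfg}
    (hZ : ValidIn d n (lastChild d v) Z) (hZℓ : Z (lastChild d v) = 0) {w b x : ℝ}
    (hw0 : 0 ≤ w) (hw1 : w ≤ 1) (hb0 : 0 ≤ b) (hb1 : b ≤ 1) (hx0 : 0 ≤ x) (hx1 : x ≤ 1)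
    (hP : w + d + weight n Z ≤ P) :
    Strategy d n v (family d v (0, w) (x, 1 - x) (1, 0) + Z)
      (family d v (b, 0) (0, 1 - x) 0 + Z) P := by
  have hd1 : (1 : ℝ) ≤ d := by exact_mod_cast hd
  refine of_move
    (validIn_family_add hd hn ⟨le_rfl, hw0, by simpa⟩ ⟨hx0, by linarith, by simp⟩ (by simp) hZ hZℓ)
    (validIn_family_add hd hn ⟨hb0, le_rfl, by simpa⟩ ⟨le_rfl, by linarith, by simpa using hx0⟩
      (by simp) hZ hZℓ)
    (by rw [weight_add, weight_family hd hn]; linarith)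
    (by rw [weight_add, weight_family hd hn]; simp only [Prod.fst_zero, Prod.snd_zero]; nlinarith)
    fun ctx hctx => ?_
  have hZ0 : ∀ j ≤ lastChild d v, Z j = 0 := fun j hj => by
    by_contra h
    exact h (by rwa [le_antisymm hj (Desc.le hd (hZ.2 j h))])
  have hc : ∀ j, child d v j → (ctx + Z) j = 0 := fun j hj => by
    simp [hctx j (.of_child hj), hZ0 j (child_iff.1 hj).2]
  have hswap : ∀ F : Cfg, ctx + (F + Z) = ctx + Z + F := fun F => by abel
  rw [hswap, hswap]
  refine move_cover ((lt_lastChild hd v).trans hn)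
    (by simp [hctx v (.refl v), hZ0 v (lt_lastChild hd v).le]) hc (fun j hj => ?_)
    (by simp [family_apply_self hd, hb0]) (by simp [family_apply_self hd]) (fun j hj => ?_)
    fun j hjv hj => by simp [family_apply_of_not_child hd hjv hj]
  · rcases (child_iff_mem_firstChildren_or hd).1 hj with hjS | rfl
    · simp [pw, family_apply_of_mem hd hjS]
    · simp [pw, family_apply_lastChild hd]
  · rcases (child_iff_mem_firstChildren_or hd).1 hj with hjS | rfl
    · simp [family_apply_of_mem hd hjS, hx0]
    · simp [family_apply_lastChild hd]

/-- Phases of the paper's step up to the cover move of `v`: fill the first children with black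
`x` one at a time, pebble the last child (leaving `Z` below it), top the first children up with
white `1 - x`, and cover `v`, sliding all black off the children. -/
theorem climb (hd : 0 < d) {v : ℕ} (hn : lastChild d v < n) {Z : Cfg}
    (hZ : ValidIn d n (lastChild d v) Z) (hZℓ : Z (lastChild d v) = 0) {w b x QB QL : ℝ}
    (hw0 : 0 ≤ w) (hw1 : w ≤ 1) (hb0 : 0 ≤ b) (hb1 : b ≤ 1) (hx0 : 0 ≤ x) (hx1 : x ≤ 1)
    (hB : ∀ u ∈ firstChildren d v, Strategy d n u 0 (Pi.single u (x, 0)) QB)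
    (hL : Strategy d n (lastChild d v) 0 (Pi.single (lastChild d v) (1, 0) + Z) QL)
    (hxQB : x ≤ QB) (hP1 : w + (d - 2) * x + QB ≤ P) (hP2 : w + (d - 1) * x + QL ≤ P)
    (hP3 : w + d + weight n Z ≤ P) :
    Strategy d n v (Pi.single v (0, w)) (family d v (b, 0) (0, 1 - x) 0 + Z) P := by
  have hSv : ∀ u ∈ firstChildren d v, Desc d v u := fun u hu =>
    .of_child (child_of_mem_firstChildren hd hu)
  have hSn : ∀ u ∈ firstChildren d v, u < n := fun u hu => (lt_lastChild_of_mem hu).trans hn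
  have hS : ∀ u ∈ firstChildren d v, ∀ u' ∈ firstChildren d v, Desc d u u' → u = u' :=
    fun u hu u' hu' => eq_of_desc_of_mem_firstChildren hd hu (child_of_mem_firstChildren hd hu')
  have hcard : ((#(firstChildren d v) : ℝ) - 1) = d - 2 := by
    rw [card_firstChildren hd]; ring
  have ph1 : Strategy d n v (Pi.single v (0, w)) (family d v (0, w) (x, 0) 0) P := by
    have := sequence (y := 0) (M := x) (P := P) hSn hSv hS
      (validIn_family (a := (0, w)) (e := 0) (c := 0) hd hn ⟨le_rfl, hw0, by simpa⟩ (by simp)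
        (by simp))
      (fun u hu j hj => family_zero_of_desc_mem hd hu hj) (fun u hu => by simpa using hB u hu)
      (by simp) (by simpa using hx0) hxQB
      (by rw [weight_family hd hn, hcard]; simp only [Prod.fst_zero, Prod.snd_zero]; linarith)
    rwa [fill_zero, add_zero, family_add_fill, family_zero_zero] at this
  have ph2 : Strategy d n v (family d v (0, w) (x, 0) 0)
      (family d v (0, w) (x, 0) (1, 0) + Z) P := by
    have := lift (.of_child (child_lastChild hd v))
      (validIn_family (a := (0, w)) (e := (x, 0)) (c := 0) hd hn ⟨le_rfl, hw0, by simpa⟩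
        ⟨hx0, le_rfl, by simpa⟩ (by simp))
      (fun j hj => family_zero_of_desc_lastChild hd hj) hL
    rw [add_zero, ← add_assoc, family_add_single] at this
    refine this.mono ?_
    rw [weight_family hd hn]
    simpa using hP2
  have ph3 : Strategy d n v (family d v (0, w) (x, 0) (1, 0) + Z)
      (family d v (0, w) (x, 1 - x) (1, 0) + Z) P := by
    have := sequence (x := (x, 1 - x)) (y := (x, 0)) (M := 1) (Q := 1) (P := P) hSn hSv hS
      (validIn_family_add (a := (0, w)) (e := 0) (c := (1, 0)) hd hn ⟨le_rfl, hw0, by simpa⟩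
        (by simp) (by simp) hZ hZℓ)
      (fun u hu j hj => ?_)
      (fun u hu => white (hSn u hu) hx0 le_rfl (by linarith) (by simp) (by simp))
      (by simp) (by simpa) le_rfl ?_
    · simpa only [add_right_comm _ Z, family_add_fill] using this
    · have hZj : Z j = 0 := by
        by_contra hZj
        rcases Desc.total hd (hZ.2 j hZj) hj with h | h
        · exact absurd (Desc.le hd h) (not_le.2 (lt_lastChild_of_mem hu))
        · exact (lt_lastChild_of_mem hu).ne
            (eq_of_desc_of_mem_firstChildren hd hu (child_lastChild hd v) h)
      simp [family_zero_of_desc_mem hd hu hj, hZj]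
    · rw [weight_add, weight_family hd hn, hcard]
      simp only [Prod.fst_zero, Prod.snd_zero]
      linarith
  exact ((ph1.trans ph2).trans ph3).trans (cover hd hn hZ hZℓ hw0 hw1 hb0 hb1 hx0 hx1 hP3)

/-- The rest of the paper's step: clear `Z` below the last child, then the whites `1 - x` on
the first children, one at a time. -/
theorem descend (hd : 0 < d) {v : ℕ} (hn : lastChild d v < n) {Z : Cfg} {b x QC QW : ℝ}
    (hb0 : 0 ≤ b) (hb1 : b ≤ 1) (hx0 : 0 ≤ x) (hx1 : x ≤ 1)
    (hC : Strategy d n (lastChild d v) Z 0 QC)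
    (hW : ∀ u ∈ firstChildren d v, Strategy d n u (Pi.single u (0, 1 - x)) 0 QW)
    (hxQW : 1 - x ≤ QW) (hP1 : b + (d - 1) * (1 - x) + QC ≤ P)
    (hP2 : b + (d - 2) * (1 - x) + QW ≤ P) :
    Strategy d n v (family d v (b, 0) (0, 1 - x) 0 + Z) (Pi.single v (b, 0)) P := by
  have hSn : ∀ u ∈ firstChildren d v, u < n := fun u hu => (lt_lastChild_of_mem hu).trans hn
  have ph1 := lift (.of_child (child_lastChild hd v))
    (validIn_family (a := (b, 0)) (e := (0, 1 - x)) (c := 0) hd hn ⟨hb0, le_rfl, by simpa⟩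
      ⟨le_rfl, by linarith, by simpa using hx0⟩ (by simp))
    (fun j hj => family_zero_of_desc_lastChild hd hj) hC
  have ph2 := sequence (W := family d v (b, 0) 0 0) (x := 0) (M := 1 - x) (P := P) hSn
    (fun u hu => .of_child (child_of_mem_firstChildren hd hu))
    (fun u hu u' hu' => eq_of_desc_of_mem_firstChildren hd hu (child_of_mem_firstChildren hd hu'))
    (validIn_family (a := (b, 0)) (e := 0) (c := 0) hd hn ⟨hb0, le_rfl, by simpa⟩ (by simp)
      (by simp))
    (fun u hu j hj => family_zero_of_desc_mem hd hu hj) (fun u hu => by simpa using hW u hu)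
    (by simp only [Prod.fst_zero, Prod.snd_zero]; linarith) (by simp) hxQW
    (by rw [weight_family hd hn, card_firstChildren hd]; simp only [Prod.fst_zero, Prod.snd_zero]
        linarith)
  rw [add_zero] at ph1
  refine (ph1.mono ?_).trans ?_
  · rw [weight_family hd hn]
    simpa using hP1
  · rwa [fill_zero, add_zero, family_add_fill, family_zero_zero] at ph2

end Strategy

/-- The three strategies at a node `v` of height `p + 2`: trading white `w` on `v` for black `b`,
pebbling `v` lazily, and clearing what the lazy pebbling leaves behind. -/
def Strategies (d h p v : ℕ) : Prop :=
  (∀ w b : ℝ, 0 ≤ w → w ≤ 1 → 0 ≤ b → b ≤ 1 →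
    Strategy d (treeSize d h) v (Pi.single v (0, w)) (Pi.single v (b, 0))
      (((d : ℝ) - 1) * (p + 2) / 2 + 1 + (w + b) / 2 + if p = 0 then w / 2 else 0)) ∧
  Strategy d (treeSize d h) v 0 (Pi.single v (1, 0) + pending d p v)
    (((d : ℝ) - 1) * p / 2 + d) ∧
  Strategy d (treeSize d h) v (pending d p v) 0 (((d : ℝ) - 1) * (p + 2) / 2 + 1)

lemma strategies_zero (hd : 0 < d) {h v : ℕ} (hv : AtHeight d h v 2) : Strategies d h 0 v := by
  have hleaf : ∀ u, child d v u → isLeaf d (treeSize d h) u := fun u hu =>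
    (hv.of_child hu).isLeaf
  have hn : lastChild d v < treeSize d h := (hv.of_child (child_lastChild hd v)).lt
  have hZ : ValidIn d (treeSize d h) (lastChild d v) 0 := ⟨valid_zero, fun _ h => absurd rfl h⟩
  have hB := fun u hu =>
    Strategy.leaf (hleaf u (child_of_mem_firstChildren hd hu)) zero_le_one le_rfl
  have hL : Strategy d (treeSize d h) (lastChild d v) 0
      (Pi.single (lastChild d v) (1, 0) + 0) 1 := by
    simpa using Strategy.leaf (hleaf _ (child_lastChild hd v)) zero_le_one le_rfl
  have hd1 : (1 : ℝ) ≤ d := by exact_mod_cast hd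
  refine ⟨fun w b hw0 hw1 hb0 hb1 => ?_, ?_, ?_⟩
  · simpa [Prod.mk_zero_zero] using Strategy.climb
      (P := ((d : ℝ) - 1) * (0 + 2) / 2 + 1 + (w + b) / 2 + w / 2)
      hd hn hZ rfl hw0 hw1 hb0 hb1 zero_le_one le_rfl hB hL le_rfl
      (by linarith) (by linarith) (by rw [weight_zero]; linarith)
  · simpa [Prod.mk_zero_zero] using Strategy.climb (P := ((d : ℝ) - 1) * (0 : ℕ) / 2 + d) hd hn
      hZ rfl le_rfl zero_le_one zero_le_one le_rfl zero_le_one le_rfl hB hL le_rfl (by linarith)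
      (by simp) (by simp)
  · simpa using Strategy.refl (P := ((d : ℝ) - 1) * (0 + 2) / 2 + 1) (X := 0) (d := d) (r := v)
      ⟨valid_zero, fun _ h => absurd rfl h⟩ (by rw [weight_zero]; linarith)

lemma strategies_succ (hd : 2 ≤ d) {h p v : ℕ} (hv : AtHeight d h v (p + 3))
    (ih : ∀ u, AtHeight d h u (p + 2) → Strategies d h p u) : Strategies d h (p + 1) v := by
  have hd0 : 0 < d := by omega
  have hD : (1 : ℝ) ≤ d - 1 := by
    have : (2 : ℝ) ≤ d := by exact_mod_cast hd
    linarith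
  have hDp : 0 ≤ ((d : ℝ) - 1) * p := mul_nonneg (by linarith) p.cast_nonneg
  have hch : ∀ u, child d v u → Strategies d h p u := fun u hu => ih u (hv.of_child hu)
  have hℓ := child_lastChild hd0 v
  have hn : lastChild d v < treeSize d h := (hv.of_child hℓ).lt
  have hZ : ValidIn d (treeSize d h) (lastChild d v) (pending d p (lastChild d v)) :=
    ⟨valid_pending hd0 (hv.of_child hℓ) (by omega), fun j hj => (pending_ne_zero hd0 hj).1⟩
  have hZℓ : pending d p (lastChild d v) (lastChild d v) = 0 := by
    by_contra h; exact (pending_ne_zero hd0 h).2.false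
  have hwZ := weight_pending hd0 (hv.of_child hℓ) p.le_succ
  have hB : ∀ x : ℝ, 0 ≤ x → x ≤ 1 → ∀ u ∈ firstChildren d v,
      Strategy d (treeSize d h) u 0 (Pi.single u (x, 0)) ((d - 1) * (p + 2) / 2 + 1 + x / 2) :=
    fun x hx0 hx1 u hu => by
      simpa [Prod.mk_zero_zero] using
        (hch u (child_of_mem_firstChildren hd0 hu)).1 0 x le_rfl zero_le_one hx0 hx1
  have hW : ∀ x : ℝ, 0 ≤ x → x ≤ 1 → ∀ u ∈ firstChildren d v,
      Strategy d (treeSize d h) u (Pi.single u (0, x)) 0 ((d - 1) * (p + 2) / 2 + 1 + x) :=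
    fun x hx0 hx1 u hu => by
      have := ((hch u (child_of_mem_firstChildren hd0 hu)).1 x 0 hx0 hx1 le_rfl zero_le_one).mono
        (P' := (d - 1) * (p + 2) / 2 + 1 + x) (by split_ifs <;> linarith)
      rwa [Prod.mk_zero_zero, Pi.single_zero] at this
  obtain ⟨-, hL, hC⟩ := hch _ hℓ
  refine ⟨fun w b hw0 hw1 hb0 hb1 => ?_, ?_, ?_⟩
  · -- this `x` makes the peaks of `climb` and `descend` both equal to the budget
    set x : ℝ := 1 / 2 + (b - w) / (2 * (d - 1))
    have hDx : ((d : ℝ) - 1) * x = (d - 1) / 2 + (b - w) / 2 := by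
      simp only [x]; field_simp
    have hx0 : 0 ≤ x := by nlinarith
    have hx1 : x ≤ 1 := by nlinarith
    simp only [Nat.succ_ne_zero, if_false, add_zero, Nat.cast_add, Nat.cast_one]
    refine (Strategy.climb hd0 hn hZ hZℓ hw0 hw1 hb0 hb1 hx0 hx1 (hB x hx0 hx1) hL (by linarith)
      ?_ ?_ ?_).trans (Strategy.descend hd0 hn hb0 hb1 hx0 hx1 hC (hW (1 - x) (by linarith)
      (by linarith)) (by linarith) ?_ ?_) <;> linarith
  · have := Strategy.climb (P := ((d : ℝ) - 1) * ((p + 1 : ℕ) : ℝ) / 2 + d) (x := 1 / 2) hd0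
      hn hZ hZℓ le_rfl zero_le_one zero_le_one le_rfl (by norm_num) (by norm_num)
      (hB _ (by norm_num) (by norm_num)) hL (by linarith) (by push_cast; linarith)
      (by push_cast; linarith) (by push_cast; linarith)
    rw [pending, ← add_assoc]
    rwa [show (1 : ℝ) - 1 / 2 = 1 / 2 by norm_num, Prod.mk_zero_zero, Pi.single_zero,
      family_of_lastChild_zero] at this
  · have := Strategy.descend (P := ((d : ℝ) - 1) * ((p + 1 : ℕ) + 2) / 2 + 1) (x := 1 / 2) hd0
      hn le_rfl zero_le_one (by norm_num) (by norm_num) hC (hW _ (by norm_num) (by norm_num))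
      (by linarith) (by push_cast; linarith) (by push_cast; linarith)
    rw [pending]
    rwa [show (1 : ℝ) - 1 / 2 = 1 / 2 by norm_num, Prod.mk_zero_zero, family_of_lastChild_zero,
      Pi.single_zero, zero_add] at this

theorem strategies (hd : 2 ≤ d) {h : ℕ} (p : ℕ) {v : ℕ} (hv : AtHeight d h v (p + 2)) :
    Strategies d h p v := by
  induction p generalizing v with
  | zero => exact strategies_zero (by omega) hv
  | succ p ih => exact strategies_succ hd hv fun u hu => ih hu

end FracPebbling

open FracPebbling

/-- a fractional pebbling of the d-ary tree of height h ≥ 3 that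
starts with white weight 2E on the root and nothing elsewhere, ends empty, and
never exceeds weight (d-1)h/2 + 1 + E. -/
theorem frac_remove_white_from_root (d h : ℕ) (hd : 2 ≤ d) (hh : 3 ≤ h)
    (E : ℝ) (hE0 : 0 < E) (hE : E ≤ 1 / 2) :
    ∃ T c, Pebbling d (treeSize d h) T c ∧
      (c 0) 0 = (0, 2 * E) ∧ (∀ i, i ≠ 0 → (c 0) i = (0, 0)) ∧ EmptyCfg (c T) ∧
      ∀ t, t ≤ T → weight (treeSize d h) (c t) ≤ ((d : ℝ) - 1) * h / 2 + 1 + E := by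
  have hroot : AtHeight d h 0 (h - 2 + 2) := by
    rw [Nat.sub_add_cancel (by omega)]; exact atHeight_root d h
  obtain ⟨hvalid, hweight, hreach⟩ := (strategies hd (h - 2) hroot).1 (2 * E) 0 (by linarith)
    (by linarith) le_rfl zero_le_one 0 valid_zero fun _ _ => rfl
  obtain ⟨T, c, hc, hc0, hcT, hcw⟩ := exists_pebbling hvalid hweight hreach
  refine ⟨T, c, hc, by simp [hc0], fun i hi => by simp [hc0, hi, Prod.zero_eq_mk],
    fun i => by rw [hcT, Prod.mk_zero_zero, Pi.single_zero, add_zero]; rfl,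
    fun t ht => (hcw t ht).trans (le_of_eq ?_)⟩
  rw [if_neg (by omega), Nat.cast_sub (by omega)]
  simp
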